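/- arXiv:2310.10386 — 3 statements merged into one kernel-verified Lean document; each statement's English description precedes it below -/
import Mathlib

section
/- (Proposition 2) Suppose Σ is invertible and 1 + b²p(1−p)(σ_{mm} + τ_{mm}) ≠ 0, and set C = (1 + b²p(1−p)(σ_{mm} + τ_{mm}))⁻¹. Let s ∈ {0,1} and J = b(s − p)·a ∈ ℝ^{2n}. Then −H⁻¹·J is the vector in ℝ^{2n} whose k-th entry (1 ≤ k ≤ n) equals b·C·σ_{km}·(s − p) and whose (n+k)-th entry (1 ≤ k ≤ n) equals b·C·τ_{km}·((1−s) − (1−p)) = −b·C·τ_{km}·(s − p). -/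
open Matrix

section aux
set_option linter.unusedSectionVars false
variable {n : Type*} [Fintype n] [DecidableEq n] {R : Type*} [CommRing R]

lemma my_mul_vecMulVec (A : Matrix n n R) (u v : n → R) :
    A * vecMulVec u v = vecMulVec (A *ᵥ u) v := by
  ext i j
  simp [mul_apply, vecMulVec_apply, mulVec, dotProduct, Finset.sum_mul]
  exact Finset.sum_congr rfl (fun k _ => by ring)

lemma my_vecMulVec_mul (u v : n → R) (A : Matrix n n R) :
    vecMulVec u v * A = vecMulVec u (v ᵥ* A) := by
  ext i j
  simp [mul_apply, vecMulVec_apply, vecMul, dotProduct, Finset.mul_sum]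
  exact Finset.sum_congr rfl (fun k _ => by ring)

lemma my_vecMulVec_mul_vecMulVec (u v w x : n → R) :
    vecMulVec u v * vecMulVec w x = (v ⬝ᵥ w) • vecMulVec u x := by
  ext i j
  simp [mul_apply, vecMulVec_apply, dotProduct, Finset.sum_mul, Finset.mul_sum]
  exact Finset.sum_congr rfl (fun k _ => by ring)

lemma my_vecMulVec_mulVec (u v x : n → R) :
    vecMulVec u v *ᵥ x = (v ⬝ᵥ x) • u := by
  ext i
  simp [mulVec, vecMulVec_apply, dotProduct, Finset.mul_sum]
  rw [Finset.sum_mul]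
  exact Finset.sum_congr rfl (fun k _ => by ring)

end aux

/-- Proposition 2. In the setting of Proposition 1, with
`C = (1 + b²p(1-p)(σ_{mm}+τ_{mm}))⁻¹`, `s ∈ {0,1}` and `J = b(s-p)·a`, the vector
`-H⁻¹·J` has `k`-th entry `b·C·σ_{km}·(s-p)` and `(n+k)`-th entry
`b·C·τ_{km}·((1-s)-(1-p))`. -/
theorem stmt_4 (n : ℕ) (hn : 1 ≤ n) (m : Fin n) (b p : ℝ)
    (hb : 0 < b) (hp0 : 0 < p) (hp1 : p < 1)
    (Λ T : Matrix (Fin n) (Fin n) ℝ)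
    (a : Fin n ⊕ Fin n → ℝ)
    (ha : a = Sum.elim (fun k => if k = m then (1 : ℝ) else 0)
      (fun k => if k = m then (-1 : ℝ) else 0))
    (S : Matrix (Fin n ⊕ Fin n) (Fin n ⊕ Fin n) ℝ)
    (hS : S = Matrix.fromBlocks Λ 0 0 T)
    (hSinv : IsUnit S.det)
    (d : ℝ) (hd : d = -(b ^ 2 * p * (1 - p)))
    (D : Matrix (Fin n ⊕ Fin n) (Fin n ⊕ Fin n) ℝ)
    (hD : D = d • Matrix.vecMulVec a a)
    (H : Matrix (Fin n ⊕ Fin n) (Fin n ⊕ Fin n) ℝ)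
    (hH : H = -S⁻¹ + D)
    (hdet : 1 + b ^ 2 * p * (1 - p) * (Λ m m + T m m) ≠ 0)
    (C : ℝ) (hC : C = (1 + b ^ 2 * p * (1 - p) * (Λ m m + T m m))⁻¹)
    (s : ℝ) (hs : s = 0 ∨ s = 1)
    (J : Fin n ⊕ Fin n → ℝ) (hJ : J = (b * (s - p)) • a) :
    ∀ k : Fin n,
      ((-H⁻¹) *ᵥ J) (Sum.inl k) = b * C * Λ k m * (s - p) ∧
      ((-H⁻¹) *ᵥ J) (Sum.inr k) = b * C * T k m * ((1 - s) - (1 - p)) := by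
  -- abbreviations
  have ht : a ⬝ᵥ (S *ᵥ a) = Λ m m + T m m := by
    subst ha hS
    simp [Matrix.fromBlocks_mulVec, dotProduct, mulVec, Fintype.sum_sum_type,
      Finset.sum_ite_eq, ite_mul, mul_ite]
  have hu : S *ᵥ a = Sum.elim (fun k => Λ k m) (fun k => -(T k m)) := by
    subst ha hS
    ext i
    cases i <;>
      simp [Matrix.fromBlocks_mulVec, mulVec, dotProduct, mul_ite, Finset.sum_ite_eq]
  have hw : (a ᵥ* S) ⬝ᵥ a = Λ m m + T m m := by
    subst ha hS
    simp [Matrix.vecMul_fromBlocks, dotProduct, vecMul, Fintype.sum_sum_type,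
      Finset.sum_ite_eq, ite_mul, mul_ite]
  obtain ⟨t, htdef⟩ : ∃ t : ℝ, Λ m m + T m m = t := ⟨_, rfl⟩
  rw [htdef] at ht hw hdet hC
  have hCmul : C * (1 - d * t) = 1 := by
    have h1 : 1 - d * t = 1 + b ^ 2 * p * (1 - p) * t := by
      rw [hd]; ring
    rw [hC, h1]
    exact inv_mul_cancel₀ hdet
  have hS1 : S⁻¹ * S = 1 := Matrix.nonsing_inv_mul S hSinv
  have hSu : S⁻¹ *ᵥ (S *ᵥ a) = a := by
    rw [Matrix.mulVec_mulVec, hS1, Matrix.one_mulVec]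
  set K : Matrix (Fin n ⊕ Fin n) (Fin n ⊕ Fin n) ℝ :=
    -(S + (d * C) • Matrix.vecMulVec (S *ᵥ a) (a ᵥ* S)) with hK
  set R : Matrix (Fin n ⊕ Fin n) (Fin n ⊕ Fin n) ℝ :=
    Matrix.vecMulVec a (a ᵥ* S) with hR
  have e1 : S⁻¹ * Matrix.vecMulVec (S *ᵥ a) (a ᵥ* S) = R := by
    rw [my_mul_vecMulVec, hSu]
  have e2 : Matrix.vecMulVec a a * S = R := by
    rw [my_vecMulVec_mul]
  have e3 : Matrix.vecMulVec a a * Matrix.vecMulVec (S *ᵥ a) (a ᵥ* S) = t • R := by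
    rw [my_vecMulVec_mul_vecMulVec, ht]
  have hcoef : d * C - d - d * (d * C) * t = 0 := by
    linear_combination d * hCmul
  have hHK : H * K = 1 := by
    rw [hH, hD, hK]
    rw [mul_neg, add_mul, mul_add, mul_add, neg_mul, neg_mul,
      Matrix.mul_smul, Matrix.mul_smul, Matrix.smul_mul, Matrix.smul_mul,
      e1, e2, e3, hS1, smul_smul, smul_smul]
    rw [neg_add, neg_add, neg_neg, neg_neg]
    match_scalars
    all_goals try ring
    all_goals linear_combination d * hCmul
  have hHinv : H⁻¹ = K := Matrix.inv_eq_right_inv hHK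
  have hC' : 1 + d * C * t = C := by linear_combination -hCmul
  have hKJ : K *ᵥ J = (-(b * (s - p) * C)) • (S *ᵥ a) := by
    rw [hK, hJ]
    rw [Matrix.neg_mulVec, Matrix.add_mulVec, Matrix.smul_mulVec,
      my_vecMulVec_mulVec]
    rw [Matrix.mulVec_smul]
    have hdot : (a ᵥ* S) ⬝ᵥ ((b * (s - p)) • a) = b * (s - p) * t := by
      rw [dotProduct_smul, hw, smul_eq_mul]
    rw [hdot, smul_smul]
    have : -((b * (s - p)) • (S *ᵥ a) + (d * C * (b * (s - p) * t)) • (S *ᵥ a))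
        = (-(b * (s - p) * (1 + d * C * t))) • (S *ᵥ a) := by
      rw [← add_smul, ← neg_smul]; congr 1; ring
    rw [this, hC']
  intro k
  have hfin : (-H⁻¹) *ᵥ J = (b * (s - p) * C) • (S *ᵥ a) := by
    rw [hHinv, Matrix.neg_mulVec, hKJ, ← neg_smul]; congr 1; ring
  rw [hfin, hu]
  constructor <;> · simp; ring
end

section
/- Under the hypotheses of Theorem 1, define the rating adjustments δ_l = μ′_l − μ_l for l ∈ {1,…,n}. If σ_{mm} ≠ 0, then for every l ∈ {1,…,n}, δ_l = (σ_{lm}/σ_{mm})·δ_m. In particular, if σ_{ll} > 0 and σ_{mm} > 0, writing σ_l = √σ_{ll}, σ_m = √σ_{mm} and ρ_{ml} = σ_{ml}/(σ_m·σ_l) with Λ symmetric, the adjustment to the unplayed surface l satisfies δ_l = (σ_l/σ_m)·ρ_{ml}·δ_m. -/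
open Matrix

/-- Under the hypotheses of Theorem 1, with rating adjustments `δ_l = μ'_l - μ_l`:
if `σ_{mm} ≠ 0` then `δ_l = (σ_{lm}/σ_{mm})·δ_m` for every `l`; in particular, if
`Λ` is symmetric and `σ_{ll} > 0`, `σ_{mm} > 0`, then writing `σ_l = √σ_{ll}`,
`σ_m = √σ_{mm}`, `ρ_{ml} = σ_{ml}/(σ_m σ_l)`, we get `δ_l = (σ_l/σ_m)·ρ_{ml}·δ_m`. -/
theorem stmt_6 (n : ℕ) (hn : 1 ≤ n) (m : Fin n) (b : ℝ) (hb : 0 < b)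
    (s : ℝ) (hs : s = 0 ∨ s = 1)
    (Λ T : Matrix (Fin n) (Fin n) ℝ)
    (a : Fin n ⊕ Fin n → ℝ)
    (ha : a = Sum.elim (fun k => if k = m then (1 : ℝ) else 0)
      (fun k => if k = m then (-1 : ℝ) else 0))
    (S : Matrix (Fin n ⊕ Fin n) (Fin n ⊕ Fin n) ℝ)
    (hS : S = Matrix.fromBlocks Λ 0 0 T)
    (hSinv : IsUnit S.det)
    (μ : Fin n ⊕ Fin n → ℝ)
    (phat : ℝ)
    (hphat : phat = Real.exp (b * μ (Sum.inl m)) /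
      (Real.exp (b * μ (Sum.inl m)) + Real.exp (b * μ (Sum.inr m))))
    (d : ℝ) (hd : d = -(b ^ 2 * phat * (1 - phat)))
    (D : Matrix (Fin n ⊕ Fin n) (Fin n ⊕ Fin n) ℝ)
    (hD : D = d • Matrix.vecMulVec a a)
    (H : Matrix (Fin n ⊕ Fin n) (Fin n ⊕ Fin n) ℝ)
    (hH : H = -S⁻¹ + D)
    (hdet : 1 + b ^ 2 * phat * (1 - phat) * (Λ m m + T m m) ≠ 0)
    (J : Fin n ⊕ Fin n → ℝ) (hJ : J = (b * (s - phat)) • a)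
    (μ' : Fin n ⊕ Fin n → ℝ) (hμ' : μ' = μ - H⁻¹ *ᵥ J)
    (δ : Fin n → ℝ) (hδ : δ = fun l => μ' (Sum.inl l) - μ (Sum.inl l))
    (hmm : Λ m m ≠ 0) :
    (∀ l : Fin n, δ l = (Λ l m / Λ m m) * δ m) ∧
    (Λ.IsSymm → ∀ l : Fin n, 0 < Λ l l → 0 < Λ m m →
      δ l = (Real.sqrt (Λ l l) / Real.sqrt (Λ m m)) *
        (Λ m l / (Real.sqrt (Λ m m) * Real.sqrt (Λ l l))) * δ m) := by
  have hSiS : S⁻¹ * S = 1 := Matrix.nonsing_inv_mul S hSinv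
  set u : Fin n ⊕ Fin n → ℝ := S *ᵥ a with hu
  have hul : ∀ l : Fin n, u (Sum.inl l) = Λ l m := by
    intro l
    simp [hu, hS, ha, Matrix.mulVec, dotProduct, Fintype.sum_sum_type, mul_ite]
  have hur : ∀ l : Fin n, u (Sum.inr l) = -T l m := by
    intro l
    simp [hu, hS, ha, Matrix.mulVec, dotProduct, Fintype.sum_sum_type, mul_ite]
  have hk : a ⬝ᵥ u = Λ m m + T m m := by
    have : a ⬝ᵥ u = ∑ i : Fin n ⊕ Fin n, a i * u i := rfl
    rw [this, Fintype.sum_sum_type]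
    simp only [ha, Sum.elim_inl, Sum.elim_inr, ite_mul, one_mul, neg_one_mul, zero_mul]
    rw [Finset.sum_ite_eq' Finset.univ m (fun k => u (Sum.inl k)),
        Finset.sum_ite_eq' Finset.univ m (fun k => -u (Sum.inr k))]
    simp [hul, hur]
  set γ : ℝ := d * (Λ m m + T m m) - 1 with hγdef
  have hγ : γ ≠ 0 := by
    intro h
    apply hdet
    rw [hγdef, hd] at h
    linarith
  have hvmv : ∀ x : Fin n ⊕ Fin n → ℝ,
      Matrix.vecMulVec a a *ᵥ x = (a ⬝ᵥ x) • a := by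
    intro x
    ext i
    simp only [Matrix.mulVec, Matrix.vecMulVec_apply, dotProduct, Pi.smul_apply, smul_eq_mul,
      Finset.sum_mul]
    exact Finset.sum_congr rfl fun j _ => by ring
  have hmulvmv : ∀ (M : Matrix (Fin n ⊕ Fin n) (Fin n ⊕ Fin n) ℝ) (w v : Fin n ⊕ Fin n → ℝ),
      M * Matrix.vecMulVec w v = Matrix.vecMulVec (M *ᵥ w) v := by
    intro M w v
    ext i j
    simp only [Matrix.mul_apply, Matrix.vecMulVec_apply, Matrix.mulVec, dotProduct,
      Finset.sum_mul]
    exact Finset.sum_congr rfl fun k _ => by ring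
  have hSiu : S⁻¹ *ᵥ u = a := by
    rw [hu, Matrix.mulVec_mulVec, hSiS, Matrix.one_mulVec]
  have hHu : H *ᵥ u = γ • a := by
    rw [hH, Matrix.add_mulVec, Matrix.neg_mulVec, hSiu, hD, Matrix.smul_mulVec, hvmv, hk]
    ext i
    simp [hγdef]
    ring
  have hfact : H = (-S⁻¹) * (1 - d • Matrix.vecMulVec u a) := by
    rw [Matrix.mul_sub, Matrix.mul_one, Matrix.mul_smul, Matrix.neg_mul, hmulvmv, hSiu,
      smul_neg, sub_neg_eq_add, hH, hD]
  have hdet2 : (1 - d • Matrix.vecMulVec u a).det = -γ := by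
    have h1 : (1 : Matrix (Fin n ⊕ Fin n) (Fin n ⊕ Fin n) ℝ) - d • Matrix.vecMulVec u a
        = 1 + Matrix.replicateCol Unit ((-d) • u) * Matrix.replicateRow Unit a := by
      rw [← Matrix.vecMulVec_eq]
      ext i j
      simp [Matrix.vecMulVec_apply, Matrix.one_apply, sub_eq_add_neg]
    rw [h1, Matrix.det_one_add_replicateCol_mul_replicateRow, dotProduct_smul, hk]
    simp [hγdef]
    ring
  have hHdet : IsUnit H.det := by
    rw [isUnit_iff_ne_zero, hfact, Matrix.det_mul, hdet2]
    have h2 : (-S⁻¹).det ≠ 0 := by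
      rw [Matrix.det_neg, Matrix.det_nonsing_inv, Ring.inverse_eq_inv']
      exact mul_ne_zero (pow_ne_zero _ (by norm_num))
        (inv_ne_zero (isUnit_iff_ne_zero.mp hSinv))
    exact mul_ne_zero h2 (neg_ne_zero.mpr hγ)
  have hHiJ : H⁻¹ *ᵥ J = (b * (s - phat) / γ) • u := by
    have hHx : H *ᵥ ((b * (s - phat) / γ) • u) = J := by
      rw [Matrix.mulVec_smul, hHu, hJ, smul_smul, div_mul_cancel₀ _ hγ]
    rw [← hHx, Matrix.mulVec_mulVec, Matrix.nonsing_inv_mul H hHdet, Matrix.one_mulVec]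
  have hδl : ∀ l : Fin n, δ l = -(b * (s - phat) / γ) * Λ l m := by
    intro l
    rw [hδ]
    simp only [hμ', Pi.sub_apply, hHiJ, Pi.smul_apply, smul_eq_mul, hul]
    ring
  have part1 : ∀ l : Fin n, δ l = (Λ l m / Λ m m) * δ m := by
    intro l
    rw [hδl l, hδl m]
    field_simp
  refine ⟨part1, ?_⟩
  intro hsym l hll hmmpos
  have e3 : Λ m l = Λ l m := (hsym.apply m l).symm
  have e1 : Real.sqrt (Λ m m) * Real.sqrt (Λ m m) = Λ m m := Real.mul_self_sqrt hmmpos.le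
  have e2 : Real.sqrt (Λ l l) ≠ 0 := by positivity
  have key : Real.sqrt (Λ l l) / Real.sqrt (Λ m m) *
      (Λ l m / (Real.sqrt (Λ m m) * Real.sqrt (Λ l l))) = Λ l m / Λ m m := by
    rw [div_mul_div_comm,
      show Real.sqrt (Λ m m) * (Real.sqrt (Λ m m) * Real.sqrt (Λ l l))
        = Real.sqrt (Λ l l) * Λ m m by rw [← mul_assoc, e1]; ring,
      mul_comm (Real.sqrt (Λ l l)) (Λ l m)]
    rw [mul_comm (Λ l m) (Real.sqrt (Λ l l))]
    exact mul_div_mul_left _ _ e2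
  rw [e3, key]
  exact part1 l
end

section
/- The diagonal entries of −H⁻¹ satisfy (−H⁻¹)₁₁ = σ_i²·(1 − L_i) and (−H⁻¹)₂₂ = σ_j²·(1 − L_j), where L_i = b²p(1−p)σ_i²·C and L_j = b²p(1−p)σ_j²·C; this is the naive variance update rule (σ_i²)′ = σ_i²(1 − L_i) obtained from the Laplace approximation. -/
open Matrix

/-- The diagonal entries of `-H⁻¹` satisfy `(-H⁻¹)₁₁ = σᵢ²(1 - Lᵢ)` and
`(-H⁻¹)₂₂ = σⱼ²(1 - Lⱼ)`, where `Lᵢ = b²p(1-p)σᵢ²C` and `Lⱼ = b²p(1-p)σⱼ²C`;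
this is the naive variance update rule `(σᵢ²)' = σᵢ²(1 - Lᵢ)` from the Laplace
approximation. -/
theorem stmt_11 (b si2 sj2 p : ℝ) (hb : 0 < b) (hsi : 0 < si2) (hsj : 0 < sj2)
    (hp0 : 0 < p) (hp1 : p < 1)
    (S : Matrix (Fin 2) (Fin 2) ℝ) (hS : S = !![si2, 0; 0, sj2])
    (a : Fin 2 → ℝ) (ha : a = ![1, -1])
    (d : ℝ) (hd : d = -(b ^ 2 * p * (1 - p)))
    (H : Matrix (Fin 2) (Fin 2) ℝ) (hH : H = -S⁻¹ + d • Matrix.vecMulVec a a)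
    (C : ℝ) (hC : C = (1 + b ^ 2 * p * (1 - p) * (si2 + sj2))⁻¹)
    (Li Lj : ℝ) (hLi : Li = b ^ 2 * p * (1 - p) * si2 * C)
    (hLj : Lj = b ^ 2 * p * (1 - p) * sj2 * C) :
    (-H⁻¹) 0 0 = si2 * (1 - Li) ∧ (-H⁻¹) 1 1 = sj2 * (1 - Lj) := by
  set q : ℝ := b ^ 2 * p * (1 - p) with hqdef
  have hq : 0 < q := by
    have : 0 < 1 - p := by linarith
    positivity
  have hsi' : si2 ≠ 0 := ne_of_gt hsi
  have hsj' : sj2 ≠ 0 := ne_of_gt hsj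
  have hD : 0 < 1 + q * (si2 + sj2) := by positivity
  have hD' : (1 + q * (si2 + sj2)) ≠ 0 := ne_of_gt hD
  -- compute S⁻¹
  have hSinv : S⁻¹ = !![si2⁻¹, 0; 0, sj2⁻¹] := by
    apply Matrix.inv_eq_right_inv
    rw [hS]
    ext i j
    fin_cases i <;> fin_cases j <;>
      simp [Matrix.mul_apply, Fin.sum_univ_two, hsi', hsj', Matrix.one_apply]
  have hHmat : H = !![-si2⁻¹ - q, q; q, -sj2⁻¹ - q] := by
    rw [hH, hSinv, hd, ha]
    ext i j
    fin_cases i <;> fin_cases j <;>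
      simp [Matrix.vecMulVec_apply] <;> ring
  -- determinant of H
  have hdet : H.det = (1 + q * (si2 + sj2)) / (si2 * sj2) := by
    rw [hHmat, Matrix.det_fin_two_of]
    field_simp
    ring
  have hdet' : H.det ≠ 0 := by
    rw [hdet]
    positivity
  have hHinv : H⁻¹ = H.det⁻¹ • !![-sj2⁻¹ - q, -q; -q, -si2⁻¹ - q] := by
    rw [Matrix.inv_def, Matrix.adjugate_fin_two]
    have h2 : !![H 1 1, -H 0 1; -H 1 0, H 0 0] = !![-sj2⁻¹ - q, -q; -q, -si2⁻¹ - q] := by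
      ext i j
      fin_cases i <;> fin_cases j <;> simp [hHmat]
    rw [h2, Ring.inverse_eq_inv]
  have key : H.det⁻¹ = si2 * sj2 / (1 + q * (si2 + sj2)) := by
    rw [hdet]
    field_simp
  constructor
  · have : (-H⁻¹) 0 0 = H.det⁻¹ * (sj2⁻¹ + q) := by
      rw [hHinv]; simp; ring
    rw [this, key, hLi, hC]
    field_simp
    ring
  · have : (-H⁻¹) 1 1 = H.det⁻¹ * (si2⁻¹ + q) := by
      rw [hHinv]; simp; ring
    rw [this, key, hLj, hC]
    field_simp
    ring
end
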